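/- arXiv:1102.5764 — 5 statements merged into one kernel-verified Lean document; each statement's English description precedes it below -/
import Mathlib

section
/- Let σ₁ and σ₂ be two p-uniform morphisms on the alphabet A_m = {0,…,m−1} and let M_σ(T) denote the m×m polynomial matrix associated with a morphism σ, with entries M_σ(T)_{i,j} = β_{σ(i),j}(T), where β_{W,j}(T) = Σ_{l ∈ P_W(j)} T^l and P_W(j) is the set of positions of letter j in the reversal of W. Then M_{σ₁∘σ₂}(T) = M_{σ₂}(T^p) · M_{σ₁}(T). -/
open Polynomial
open scoped Classical

/-- The extension of a substitution `σ` on the alphabet `{0,…,m-1}` to finite words. -/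
def applyMorph {m : ℕ} (σ : Fin m → List (Fin m)) (w : List (Fin m)) : List (Fin m) :=
  w.flatMap σ

/-- The `n`-th iterate `σⁿ` of a substitution, as a map on letters. -/
def iterMorph {m : ℕ} (σ : Fin m → List (Fin m)) : ℕ → Fin m → List (Fin m)
  | 0 => fun i => [i]
  | n + 1 => fun i => applyMorph σ (iterMorph σ n i)

/-- `β_{W,j}(T) = Σ_l T^l`, summed over the positions `l` of the letter `j` in the
reversal of the word `W` (entries in `F_p[T]`). -/
noncomputable def beta (p m : ℕ) (W : List (Fin m)) (j : Fin m) : Polynomial (ZMod p) :=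
  ∑ l ∈ Finset.range W.length,
    if W.reverse.getD l j = j then Polynomial.X ^ l else 0

/-- The matrix `M_σ(T) = (β_{σ(i),j}(T))_{i,j}` associated with a substitution `σ`. -/
noncomputable def Mmat (p m : ℕ) (σ : Fin m → List (Fin m)) :
    Matrix (Fin m) (Fin m) (Polynomial (ZMod p)) :=
  fun i j => beta p m (σ i) j

/-- Substitution `T ↦ T^r` applied entrywise to a polynomial matrix. -/
noncomputable def substMat {p m : ℕ} (r : ℕ)
    (M : Matrix (Fin m) (Fin m) (Polynomial (ZMod p))) :
    Matrix (Fin m) (Fin m) (Polynomial (ZMod p)) :=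
  M.map fun f => f.comp (Polynomial.X ^ r)

/-- Left-to-right generating function of occurrences of `j`. -/
noncomputable def g (p m : ℕ) (j : Fin m) : List (Fin m) → Polynomial (ZMod p)
  | [] => 0
  | c :: t => (if c = j then 1 else 0) + X * g p m j t

lemma g_eq (p m : ℕ) (j : Fin m) (V : List (Fin m)) :
    g p m j V = ∑ l ∈ Finset.range V.length, if V.getD l j = j then X ^ l else 0 := by
  induction V with
  | nil => simp [g]
  | cons c t ih =>
    rw [List.length_cons, Finset.sum_range_succ', g, ih, Finset.mul_sum]
    simp [mul_ite, pow_succ, add_comm, mul_comm]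

lemma beta_eq_g (p m : ℕ) (W : List (Fin m)) (j : Fin m) :
    beta p m W j = g p m j W.reverse := by
  rw [g_eq, beta, List.length_reverse]

lemma g_append (p m : ℕ) (j : Fin m) (U V : List (Fin m)) :
    g p m j (U ++ V) = g p m j U + X ^ U.length * g p m j V := by
  induction U with
  | nil => simp [g]
  | cons c t ih => simp [g, ih, pow_succ, mul_add]; ring

lemma g_flatMap (p m : ℕ) (j d : Fin m) (τ : Fin m → List (Fin m))
    (hτ : ∀ c, (τ c).length = p) (u : List (Fin m)) :
    g p m j (u.flatMap τ) =
      ∑ a ∈ Finset.range u.length, X ^ (p * a) * g p m j (τ (u.getD a d)) := by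
  induction u with
  | nil => simp [g]
  | cons c t ih =>
    rw [List.flatMap_cons, g_append, ih, List.length_cons, Finset.sum_range_succ',
      Finset.mul_sum, hτ]
    simp [pow_succ, pow_mul, mul_assoc, add_comm, mul_comm]

/-- For `p`-uniform morphisms `σ₁, σ₂`, one has `M_{σ₁∘σ₂}(T) = M_{σ₂}(T^p)·M_{σ₁}(T)`. -/
theorem Mmat_comp (p m : ℕ) [Fact p.Prime]
    (σ₁ σ₂ : Fin m → List (Fin m))
    (hσ₁ : ∀ i, (σ₁ i).length = p) (hσ₂ : ∀ i, (σ₂ i).length = p) :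
    Mmat p m (fun i => applyMorph σ₁ (σ₂ i)) =
      substMat p (Mmat p m σ₂) * Mmat p m σ₁ := by
  funext i j
  rw [Matrix.mul_apply]
  simp only [Mmat, substMat, Matrix.map_apply]
  rw [beta_eq_g, applyMorph, List.reverse_flatMap,
    g_flatMap p m j j (List.reverse ∘ σ₁) (fun c => by simp [Function.comp, hσ₁ c]),
    List.length_reverse, hσ₂]
  have hcomp : ∀ k, (beta p m (σ₂ i) k).comp (X ^ p) =
      ∑ a ∈ Finset.range p, if (σ₂ i).reverse.getD a k = k then X ^ (p * a) else 0 := by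
    intro k
    rw [beta, hσ₂, ← coe_compRingHom_apply, map_sum]
    refine Finset.sum_congr rfl fun a _ => ?_
    split <;> simp [coe_compRingHom_apply, X_pow_comp, pow_mul]
  simp only [hcomp, Finset.sum_mul, ite_mul, zero_mul]
  rw [Finset.sum_comm]
  refine Finset.sum_congr rfl fun a ha => ?_
  rw [Finset.mem_range] at ha
  have hlen : a < (σ₂ i).reverse.length := by rw [List.length_reverse, hσ₂ i]; exact ha
  have hgd : ∀ d : Fin m, (σ₂ i).reverse.getD a d = (σ₂ i).reverse[a] := fun d =>
    List.getD_eq_getElem _ _ hlen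
  simp only [hgd]
  rw [Finset.sum_ite_eq Finset.univ ((σ₂ i).reverse[a]) (fun k => X ^ (p * a) * beta p m (σ₁ k) j)]
  simp [beta_eq_g]
end

section
/- Let σ be a p-uniform morphism on A_m. Then for every n ≥ 1, the matrix of the iterated morphism satisfies M_{σ^n}(T) = M_σ(T^{p^{n−1}}) · M_σ(T^{p^{n−2}}) ⋯ M_σ(T). -/
open Polynomial
open scoped Classical

/-!
`β_{W,j}` is the generating polynomial of the positions of `j` in `W`, counted from the right.
Hence `β_{UV,j} = β_{V,j} + T^{|V|} β_{U,j}`, and expanding `σ(W)` letter by letter gives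
`β_{σ(W),j}(T) = Σ_k β_{W,k}(T^p) β_{σ(k),j}(T)` when `σ` is `p`-uniform, i.e.
`M_{σ∘τ}(T) = M_τ(T^p) M_σ(T)`. Iterating, and using that `T ↦ T^r` is a ring endomorphism
of matrices with `(T^a)^b = T^{ab}`, yields the product formula.
-/

section Beta

variable {p m : ℕ}

lemma beta_nil (j : Fin m) : beta p m [] j = 0 := by
  simp [beta]

lemma beta_singleton (a j : Fin m) : beta p m [a] j = if a = j then 1 else 0 := by
  simp [beta]

lemma beta_append (U V : List (Fin m)) (j : Fin m) :
    beta p m (U ++ V) j = beta p m V j + X ^ V.length * beta p m U j := by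
  rw [beta, beta, beta, Finset.mul_sum, List.length_append, add_comm U.length,
    Finset.sum_range_add]
  congr 1
  · refine Finset.sum_congr rfl fun l hl => ?_
    rw [List.reverse_append, List.getD_append _ _ _ _ (by simpa using hl)]
  · refine Finset.sum_congr rfl fun l _ => ?_
    rw [List.reverse_append, List.getD_append_right _ _ _ _ (by simp),
      List.length_reverse, Nat.add_sub_cancel_left]
    split_ifs <;> simp [pow_add]

end Beta

section Morphism

variable {m k : ℕ} {σ : Fin m → List (Fin m)}

lemma applyMorph_cons (a : Fin m) (W : List (Fin m)) :
    applyMorph σ (a :: W) = σ a ++ applyMorph σ W :=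
  List.flatMap_cons

lemma length_applyMorph (hσ : ∀ i, (σ i).length = k) (W : List (Fin m)) :
    (applyMorph σ W).length = k * W.length := by
  simp [applyMorph, List.length_flatMap, hσ, mul_comm]

lemma beta_applyMorph (p : ℕ) (hσ : ∀ i, (σ i).length = k) (W : List (Fin m)) (j : Fin m) :
    beta p m (applyMorph σ W) j
      = ∑ l : Fin m, (beta p m W l).comp (X ^ k) * beta p m (σ l) j := by
  induction W with
  | nil => simp [applyMorph, beta_nil]
  | cons a W ih =>
    have hterm (l : Fin m) : (beta p m ([a] ++ W) l).comp (X ^ k) * beta p m (σ l) j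
        = (beta p m W l).comp (X ^ k) * beta p m (σ l) j
          + if a = l then X ^ (k * W.length) * beta p m (σ a) j else 0 := by
      rw [beta_append, beta_singleton]
      split_ifs with h <;> simp [h, add_mul, ← pow_mul]
    rw [applyMorph_cons, beta_append, length_applyMorph hσ, ih, ← List.singleton_append,
      Finset.sum_congr rfl fun l _ => hterm l, Finset.sum_add_distrib, Finset.sum_ite_eq]
    simp

lemma Mmat_applyMorph_comp (p : ℕ) (hσ : ∀ i, (σ i).length = k) (τ : Fin m → List (Fin m)) :
    Mmat p m (applyMorph σ ∘ τ) = substMat k (Mmat p m τ) * Mmat p m σ :=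
  Matrix.ext fun i j => beta_applyMorph p hσ (τ i) j

lemma Mmat_iterMorph_zero (p : ℕ) (σ : Fin m → List (Fin m)) :
    Mmat p m (iterMorph σ 0) = 1 := by
  ext i j
  simp [Mmat, iterMorph, beta_singleton, Matrix.one_apply]

end Morphism

section Subst

variable {p m : ℕ}

lemma substMat_list_prod (r : ℕ) (L : List (Matrix (Fin m) (Fin m) (Polynomial (ZMod p)))) :
    substMat r L.prod = (L.map (substMat r)).prod :=
  map_list_prod (compRingHom (X ^ r)).mapMatrix L

lemma substMat_substMat (a b : ℕ) (M : Matrix (Fin m) (Fin m) (Polynomial (ZMod p))) :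
    substMat b (substMat a M) = substMat (a * b) M := by
  ext i j
  simp only [substMat, Matrix.map_apply, comp_assoc, X_pow_comp, ← pow_mul, mul_comm b]

lemma substMat_one (M : Matrix (Fin m) (Fin m) (Polynomial (ZMod p))) : substMat 1 M = M := by
  ext i j
  simp [substMat]

end Subst

theorem Mmat_iter_general (p m : ℕ)
    (σ : Fin m → List (Fin m)) (hσ : ∀ i, (σ i).length = p)
    (n : ℕ) :
    Mmat p m (iterMorph σ n) =
      ((List.range n).map fun i => substMat (p ^ (n - 1 - i)) (Mmat p m σ)).prod := by
  induction n with
  | zero => simp [Mmat_iterMorph_zero]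
  | succ n ih =>
    have hshift : ∀ i ∈ List.range n,
        (substMat p ∘ fun i => substMat (p ^ (n - 1 - i)) (Mmat p m σ)) i
          = substMat (p ^ (n - i)) (Mmat p m σ) := by
      intro i hi
      rw [Function.comp_apply, substMat_substMat, ← pow_succ,
        show n - 1 - i + 1 = n - i by simp at hi; omega]
    calc Mmat p m (iterMorph σ (n + 1))
        = substMat p (Mmat p m (iterMorph σ n)) * Mmat p m σ :=
          Mmat_applyMorph_comp p hσ (iterMorph σ n)
      _ = _ := by
          rw [ih, substMat_list_prod, List.map_map, List.map_congr_left hshift, List.range_succ,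
            List.map_append, List.prod_append]
          simp [substMat_one]

/-- `M_{σⁿ}(T) = M_σ(T^{p^{n-1}}) · M_σ(T^{p^{n-2}}) ⋯ M_σ(T)` for every `n ≥ 1`. -/
theorem Mmat_iter (p m : ℕ) [Fact p.Prime]
    (σ : Fin m → List (Fin m)) (hσ : ∀ i, (σ i).length = p)
    (n : ℕ) (hn : 1 ≤ n) :
    Mmat p m (iterMorph σ n) =
      ((List.range n).map fun i => substMat (p ^ (n - 1 - i)) (Mmat p m σ)).prod :=
  Mmat_iter_general p m σ hσ n
end

section
/- Let p be a prime, σ a p-uniform morphism on A_m, φ: A_m → F_q a coding (q a power of p), U ∈ A_m^* a finite word, and α ∈ F_{p^t}. Then the sequence (P_{φ(σ^n(U))}(α))_{n≥0} of elements of the algebraic closure of F_p is ultimately periodic. -/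
open Polynomial
open scoped Classical

/-- The polynomial `P_W(T) = Σ_{j} w_{m-1-j} T^j` of a word with letters in a semiring. -/
noncomputable def Pword {R : Type*} [Semiring R] (W : List R) : Polynomial R :=
  ∑ j ∈ Finset.range W.length, Polynomial.C (W.getD (W.length - 1 - j) 0) * Polynomial.X ^ j

lemma Pword_nil {R : Type*} [Semiring R] : Pword ([] : List R) = 0 := by
  simp [Pword]

lemma Pword_cons {R : Type*} [Semiring R] (a : R) (W : List R) :
    Pword (a :: W) = C a * X ^ W.length + Pword W := by
  unfold Pword
  rw [List.length_cons, Finset.sum_range_succ]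
  rw [add_comm]
  congr 1
  · simp
  · apply Finset.sum_congr rfl
    intro j hj
    rw [Finset.mem_range] at hj
    have h1 : W.length + 1 - 1 - j = (W.length - 1 - j) + 1 := by omega
    rw [h1, List.getD_cons_succ]

lemma Pword_append {R : Type*} [Semiring R] (V W : List R) :
    Pword (V ++ W) = Pword V * X ^ W.length + Pword W := by
  induction V with
  | nil => simp [Pword_nil]
  | cons a V ih =>
      rw [List.cons_append, Pword_cons, Pword_cons, ih, List.length_append, pow_add,
        add_mul, mul_assoc, add_assoc]

noncomputable def comb {m : ℕ} {K : Type*} [Semiring K] (β : K) (y : Fin m → K) :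
    List (Fin m) → K
  | [] => 0
  | a :: w => y a * β ^ w.length + comb β y w

section main

variable {m : ℕ} {F K : Type*} [Field F] [Field K] [Algebra F K]
  (σ : Fin m → List (Fin m)) (φ : Fin m → F) (α : K)

lemma pv_append (V W : List (Fin m)) :
    aeval α (Pword ((V ++ W).map φ)) =
      aeval α (Pword (V.map φ)) * α ^ W.length + aeval α (Pword (W.map φ)) := by
  rw [List.map_append, Pword_append, map_add, map_mul, map_pow, aeval_X, List.length_map]

lemma flatMap_length {p : ℕ} (f : Fin m → List (Fin m)) (hf : ∀ i, (f i).length = p)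
    (w : List (Fin m)) : (w.flatMap f).length = p * w.length := by
  induction w with
  | nil => simp
  | cons a w ih =>
      rw [List.flatMap_cons, List.length_append, ih, hf, List.length_cons]
      ring

lemma pv_flatMap {c : ℕ} (f : Fin m → List (Fin m)) (hf : ∀ i, (f i).length = c)
    (w : List (Fin m)) :
    aeval α (Pword ((w.flatMap f).map φ)) =
      comb (α ^ c) (fun i => aeval α (Pword ((f i).map φ))) w := by
  induction w with
  | nil => simp [comb, Pword_nil]
  | cons a w ih =>
      rw [List.flatMap_cons, pv_append, ih, flatMap_length f hf, pow_mul]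
      rfl

lemma iterMorph_succ' (n : ℕ) (i : Fin m) :
    iterMorph σ (n + 1) i = (σ i).flatMap (iterMorph σ n) := by
  induction n generalizing i with
  | zero => simp [iterMorph, applyMorph]
  | succ n ih =>
      show applyMorph σ (iterMorph σ (n + 1) i) = _
      rw [ih, applyMorph, List.flatMap_assoc]
      rfl

lemma iterMorph_length {p : ℕ} (hσ : ∀ i, (σ i).length = p) (n : ℕ) (i : Fin m) :
    (iterMorph σ n i).length = p ^ n := by
  induction n generalizing i with
  | zero => simp [iterMorph]
  | succ n ih =>
      rw [iterMorph_succ', flatMap_length (iterMorph σ n) ih, hσ, pow_succ]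

end main

/-- For a `p`-uniform morphism `σ`, a coding `φ : A_m → F_q`, a finite word `U` and an
element `α` of `F_{p^t}` (inside any `F_q`-algebra field `K`, characterized by
`α^{p^t} = α`), the sequence `(P_{φ(σⁿ(U))}(α))_{n≥0}` is ultimately periodic. -/
theorem Pword_coding_eval_ultimately_periodic
    (p e q : ℕ) (hp : p.Prime) (he : 1 ≤ e) (hq : q = p ^ e)
    (F : Type*) [Field F] [Fintype F] (hcard : Fintype.card F = q)
    (m : ℕ) (σ : Fin m → List (Fin m)) (hσ : ∀ i, (σ i).length = p)
    (φ : Fin m → F) (U : List (Fin m))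
    (K : Type*) [Field K] [Algebra F K]
    (t : ℕ) (ht : 1 ≤ t) (α : K) (hα : α ^ p ^ t = α) :
    ∃ N d : ℕ, 0 < d ∧ ∀ n ≥ N,
      Polynomial.aeval α (Pword ((U.flatMap (iterMorph σ (n + d))).map φ)) =
        Polynomial.aeval α (Pword ((U.flatMap (iterMorph σ n)).map φ)) := by
  haveI : NeZero t := ⟨by omega⟩
  -- periodicity of α ^ p ^ n
  have hstep1 : ∀ b : ℕ, α ^ p ^ (b + t) = α ^ p ^ b := by
    intro b
    rw [pow_add, mul_comm, pow_mul, hα]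
  have hper : ∀ n : ℕ, α ^ p ^ n = α ^ p ^ (n % t) := by
    intro n
    conv_lhs => rw [← Nat.mod_add_div n t]
    generalize n / t = k
    induction k with
    | zero => simp
    | succ k ih =>
        have : n % t + t * (k + 1) = (n % t + t * k) + t := by ring
        rw [this, hstep1, ih]
  set β : ZMod t → K := fun r => α ^ p ^ r.val with hβ
  set G : ((Fin m → K) × ZMod t) → ((Fin m → K) × ZMod t) :=
    fun s => (fun i => comb (β s.2) s.1 (σ i), s.2 + 1) with hG
  set s : ℕ → ((Fin m → K) × ZMod t) :=
    fun n => (fun i => aeval α (Pword ((iterMorph σ n i).map φ)), (n : ZMod t)) with hs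
  have hβn : ∀ n : ℕ, β (n : ZMod t) = α ^ p ^ n := by
    intro n
    rw [hβ]
    simp only
    rw [ZMod.val_natCast, ← hper]
  have hstep : ∀ n, s (n + 1) = G (s n) := by
    intro n
    rw [hs, hG]
    simp only
    refine Prod.ext ?_ (by push_cast; rfl)
    funext i
    simp only
    rw [iterMorph_succ', pv_flatMap φ α (iterMorph σ n) (iterMorph_length σ hσ n), hβn]
  have hiter : ∀ n, s n = G^[n] (s 0) := by
    intro n
    induction n with
    | zero => rfl
    | succ n ih => rw [hstep, ih, Function.iterate_succ_apply']
  -- finiteness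
  have hint : IsIntegral F α := by
    refine ⟨X ^ p ^ t - X, ?_, ?_⟩
    · have h2 : 2 ≤ p ^ t := by
        calc 2 ≤ p := hp.two_le
        _ = p ^ 1 := (pow_one p).symm
        _ ≤ p ^ t := Nat.pow_le_pow_right hp.pos ht
      refine monic_X_pow_sub ?_
      rw [degree_X]
      exact_mod_cast h2
    · simp [hα]
  haveI : FiniteDimensional F (Algebra.adjoin F {α}) :=
    ⟨(Submodule.fg_top _).mpr hint.fg_adjoin_singleton⟩
  haveI : Finite (Algebra.adjoin F {α}) := Module.finite_of_finite F
  have hmem : ∀ n i, (s n).1 i ∈ Algebra.adjoin F {α} := by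
    intro n i
    exact aeval_mem_adjoin_singleton F α
  -- pigeonhole
  obtain ⟨a, b, hab, heq⟩ :
      ∃ a b : ℕ, a < b ∧ s a = s b := by
    have : ∃ a b : ℕ, a ≠ b ∧
        (fun n => ((fun i => (⟨(s n).1 i, hmem n i⟩ : Algebra.adjoin F {α})), (s n).2)) a =
        (fun n => ((fun i => (⟨(s n).1 i, hmem n i⟩ : Algebra.adjoin F {α})), (s n).2)) b := by
      obtain ⟨a, b, h1, h2⟩ := Finite.exists_ne_map_eq_of_infinite
        (fun n => ((fun i => (⟨(s n).1 i, hmem n i⟩ : Algebra.adjoin F {α})), (s n).2))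
      exact ⟨a, b, h1, h2⟩
    obtain ⟨a, b, hne, h⟩ := this
    have hs' : s a = s b := by
      simp only [Prod.mk.injEq] at h
      refine Prod.ext (funext fun i => ?_) h.2
      have := congrFun h.1 i
      exact Subtype.ext_iff.mp this
    rcases hne.lt_or_gt with h' | h'
    · exact ⟨a, b, h', hs'⟩
    · exact ⟨b, a, h', hs'.symm⟩
  refine ⟨a, b - a, by omega, fun n hn => ?_⟩
  have hsn : ∀ n ≥ a, s (n + (b - a)) = s n := by
    intro n hn
    have e1 : s n = G^[n - a] (s a) := by
      rw [hiter n, hiter a, ← Function.iterate_add_apply]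
      congr 1; omega
    have e2 : s (n + (b - a)) = G^[n - a] (s b) := by
      rw [hiter (n + (b - a)), hiter b, ← Function.iterate_add_apply]
      congr 1; omega
    rw [e1, e2, heq]
  have key := hsn n hn
  have hU : ∀ k, aeval α (Pword ((U.flatMap (iterMorph σ k)).map φ)) =
      comb (β (s k).2) (s k).1 U := by
    intro k
    rw [pv_flatMap φ α (iterMorph σ k) (iterMorph_length σ hσ k), hs]
    simp only
    rw [hβn]
  rw [hU, hU, key]
end

section
/- Let f ∈ F_q((T^{-1})) and suppose there exist real numbers 0 < δ ≤ ρ, θ ≥ 1, positive constants c₀, c₁, c₂, and a sequence of rational functions (P_n/Q_n)_{n≥1} with P_n, Q_n ∈ F_q[T], Q_n ≠ 0, such that (i) |Q_n| < |Q_{n+1}| ≤ c₀|Q_n|^θ and (ii) c₁/|Q_n|^{1+ρ} ≤ |f − P_n/Q_n| ≤ c₂/|Q_n|^{1+δ} for all n. Then the irrationality exponent of f satisfies 1 + δ ≤ μ(f) ≤ θ(1+ρ)/δ. -/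
open Polynomial LaurentSeries
open scoped Classical

/-- The absolute value `|f| = |T|^{-i₀}` on `F((T⁻¹))`, where `i₀` is the order of `f`
as a Hahn series in `T⁻¹` and `t = |T| > 1` is fixed; `|0| = 0`. -/
noncomputable def lAbs {F : Type*} [Field F] (t : ℝ) (f : LaurentSeries F) : ℝ :=
  if f = 0 then 0 else t ^ (-f.order)

/-- The image of a polynomial `P(T)` in the field of Laurent series in `T⁻¹`:
the polynomial variable `T` is sent to the inverse of the Hahn-series variable. -/
noncomputable def polyLS {F : Type*} [Field F] (P : Polynomial F) : LaurentSeries F :=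
  Polynomial.aeval (HahnSeries.single (-1 : ℤ) (1 : F)) P

/-- The irrationality exponent `μ(f)`: the supremum of the real numbers `τ` for which
`|f - P/Q| < |Q|^{-τ}` has infinitely many solutions `(P, Q) ∈ F_q[T]²`, `Q ≠ 0`. -/
noncomputable def irrExp {F : Type*} [Field F] (t : ℝ) (f : LaurentSeries F) : ℝ :=
  sSup {τ : ℝ | {PQ : Polynomial F × Polynomial F | PQ.2 ≠ 0 ∧
    lAbs t (f - polyLS PQ.1 / polyLS PQ.2) < (lAbs t (polyLS PQ.2)) ^ (-τ)}.Infinite}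

/-!
The lower bound is immediate: since `|Q_n| → ∞`, the upper estimate in (ii) makes `P_n/Q_n`
a solution of `|f - P/Q| < |Q|^{-τ}` for every `τ < 1 + δ` and all large `n`.

For the upper bound, take a solution `P/Q` of large height `x = |Q|` and the index `k` with
`|Q_k|^δ ≤ c₂ x < |Q_{k+1}|^δ`. Then `P_{k+1}/Q_{k+1}` lies within `1/(x |Q_{k+1}|)` of `f`,
whereas two distinct fractions with denominators `Q`, `Q_{k+1}` are at least that far apart
(their difference has a nonzero polynomial numerator). By the ultrametric inequality either
`P/Q ≠ P_{k+1}/Q_{k+1}` and `x^τ < x |Q_{k+1}|`, or the two fractions coincide and the lower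
estimate in (ii) gives `c₁ x^τ < |Q_{k+1}|^{1+ρ}`. Since `|Q_{k+1}| ≤ c₀ |Q_k|^θ ≲ x^{θ/δ}`,
both cases give `x^τ ≲ x^{θ(1+ρ)/δ}`, and letting `x → ∞` yields `τ ≤ θ(1+ρ)/δ`.
-/

open Filter

section LAbs

variable {F : Type*} [Field F] {t : ℝ}

lemma lAbs_zero : lAbs t (0 : LaurentSeries F) = 0 := if_pos rfl

lemma lAbs_of_ne_zero {x : LaurentSeries F} (hx : x ≠ 0) : lAbs t x = t ^ (-x.order) :=
  if_neg hx

lemma lAbs_nonneg (ht : 1 < t) (x : LaurentSeries F) : 0 ≤ lAbs t x := by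
  unfold lAbs
  split_ifs
  exacts [le_rfl, by positivity]

lemma lAbs_pos (ht : 1 < t) {x : LaurentSeries F} (hx : x ≠ 0) : 0 < lAbs t x := by
  rw [lAbs_of_ne_zero hx]
  positivity

lemma lAbs_mul (ht : 1 < t) (x y : LaurentSeries F) :
    lAbs t (x * y) = lAbs t x * lAbs t y := by
  rcases eq_or_ne x 0 with rfl | hx
  · simp [lAbs_zero]
  rcases eq_or_ne y 0 with rfl | hy
  · simp [lAbs_zero]
  rw [lAbs_of_ne_zero hx, lAbs_of_ne_zero hy, lAbs_of_ne_zero (mul_ne_zero hx hy),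
    HahnSeries.order_mul hx hy, neg_add, zpow_add₀ (by positivity)]

lemma lAbs_div (ht : 1 < t) (x y : LaurentSeries F) :
    lAbs t (x / y) = lAbs t x / lAbs t y := by
  rcases eq_or_ne y 0 with rfl | hy
  · simp [lAbs_zero]
  rw [eq_div_iff (lAbs_pos ht hy).ne', ← lAbs_mul ht, div_mul_cancel₀ x hy]

lemma lAbs_neg (x : LaurentSeries F) : lAbs t (-x) = lAbs t x := by
  simp [lAbs, HahnSeries.order_neg]

lemma lAbs_add_le_max (ht : 1 < t) (x y : LaurentSeries F) :
    lAbs t (x + y) ≤ max (lAbs t x) (lAbs t y) := by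
  rcases eq_or_ne x 0 with rfl | hx
  · simp
  rcases eq_or_ne y 0 with rfl | hy
  · simp
  rcases eq_or_ne (x + y) 0 with hxy | hxy
  · rw [hxy, lAbs_zero]
    exact le_max_of_le_left (lAbs_nonneg ht x)
  have hmono : Monotone fun k : ℤ => t ^ k := fun _ _ => zpow_le_zpow_right₀ ht.le
  rw [lAbs_of_ne_zero hx, lAbs_of_ne_zero hy, lAbs_of_ne_zero hxy, ← hmono.map_max]
  exact hmono (by have := HahnSeries.min_order_le_order_add hxy; omega)

lemma lAbs_sub_le_max (ht : 1 < t) (x y : LaurentSeries F) :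
    lAbs t (x - y) ≤ max (lAbs t x) (lAbs t y) := by
  simpa [sub_eq_add_neg, lAbs_neg] using lAbs_add_le_max ht x (-y)

lemma mul_lAbs_le_of_lAbs_lt (ht : 1 < t) {x y : LaurentSeries F} (hx : x ≠ 0) (hy : y ≠ 0)
    (h : lAbs t x < lAbs t y) : t * lAbs t x ≤ lAbs t y := by
  rw [lAbs_of_ne_zero hx, lAbs_of_ne_zero hy] at h ⊢
  have hlt : -x.order < -y.order := (zpow_lt_zpow_iff_right₀ ht).1 h
  calc t * t ^ (-x.order) = t ^ (-x.order + 1) := by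
        rw [zpow_add_one₀ (by positivity), mul_comm]
    _ ≤ t ^ (-y.order) := zpow_le_zpow_right₀ ht.le (by omega)

end LAbs

section PolyLS

variable {F : Type*} [Field F] {t : ℝ}

lemma polyLS_monomial (k : ℕ) (a : F) :
    polyLS (monomial k a) = HahnSeries.single (-(k : ℤ)) a := by
  rw [polyLS, aeval_monomial, HahnSeries.single_pow, HahnSeries.algebraMap_apply' ℤ,
    PowerSeries.algebraMap_apply, Algebra.algebraMap_self, RingHom.id_apply,
    HahnSeries.ofPowerSeries_C, HahnSeries.C_apply, HahnSeries.single_mul_single]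
  simp

lemma coeff_polyLS (P : F[X]) (n : ℕ) : (polyLS P).coeff (-(n : ℤ)) = P.coeff n := by
  induction P using Polynomial.induction_on' with
  | add P R hP hR =>
    rw [polyLS, map_add, HahnSeries.coeff_add, Polynomial.coeff_add, ← hP, ← hR]
    rfl
  | monomial k a =>
    rw [polyLS_monomial, HahnSeries.coeff_single, coeff_monomial]
    simp [eq_comm]

lemma polyLS_ne_zero {P : F[X]} (hP : P ≠ 0) : polyLS P ≠ 0 := by
  intro h
  have := coeff_polyLS P P.natDegree
  rw [h, HahnSeries.coeff_zero, eq_comm, ← leadingCoeff] at this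
  exact hP (leadingCoeff_eq_zero.1 this)

lemma pow_natDegree_le_lAbs_polyLS (ht : 1 < t) {P : F[X]} (hP : P ≠ 0) :
    t ^ P.natDegree ≤ lAbs t (polyLS P) := by
  have horder : (polyLS P).order ≤ -(P.natDegree : ℤ) :=
    HahnSeries.order_le_of_coeff_ne_zero (by rwa [coeff_polyLS, ← leadingCoeff, ne_eq,
      leadingCoeff_eq_zero])
  rw [lAbs_of_ne_zero (polyLS_ne_zero hP), ← zpow_natCast]
  exact zpow_le_zpow_right₀ ht.le (by omega)

lemma one_le_lAbs_polyLS (ht : 1 < t) {P : F[X]} (hP : P ≠ 0) : 1 ≤ lAbs t (polyLS P) :=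
  (one_le_pow₀ ht.le).trans (pow_natDegree_le_lAbs_polyLS ht hP)

lemma finite_setOf_lAbs_polyLS_le [Finite F] (ht : 1 < t) (B : ℝ) :
    {P : F[X] | lAbs t (polyLS P) ≤ B}.Finite := by
  obtain ⟨N, hN⟩ := pow_unbounded_of_one_lt B ht
  have : Finite (degreeLT F N) := Finite.of_equiv _ (degreeLTEquiv F N).symm.toEquiv
  refine (degreeLT F N : Set F[X]).toFinite.subset fun P hP => ?_
  rw [SetLike.mem_coe, mem_degreeLT]
  rcases eq_or_ne P 0 with rfl | hP0
  · exact degree_zero (R := F) ▸ WithBot.bot_lt_coe _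
  rw [← natDegree_lt_iff_degree_lt hP0]
  have : t ^ P.natDegree < t ^ N := (pow_natDegree_le_lAbs_polyLS ht hP0).trans_lt
    ((show lAbs t (polyLS P) ≤ B from hP).trans_lt hN)
  exact (pow_lt_pow_iff_right₀ ht).1 this

lemma inv_mul_le_lAbs_polyLS_div_sub_div (ht : 1 < t) {P Q P' Q' : F[X]} (hQ : Q ≠ 0)
    (hQ' : Q' ≠ 0) (hne : polyLS P / polyLS Q ≠ polyLS P' / polyLS Q') :
    (lAbs t (polyLS Q) * lAbs t (polyLS Q'))⁻¹ ≤
      lAbs t (polyLS P / polyLS Q - polyLS P' / polyLS Q') := by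
  have hnum : polyLS P * polyLS Q' - polyLS Q * polyLS P' = polyLS (P * Q' - Q * P') := by
    simp only [polyLS, map_sub, map_mul]
  have hN : P * Q' - Q * P' ≠ 0 := by
    rintro hN
    rw [hN, show polyLS (0 : F[X]) = 0 from map_zero _, sub_eq_zero] at hnum
    exact hne ((div_eq_div_iff (polyLS_ne_zero hQ) (polyLS_ne_zero hQ')).2 (by
      rw [hnum, mul_comm]))
  rw [div_sub_div _ _ (polyLS_ne_zero hQ) (polyLS_ne_zero hQ'), hnum, lAbs_div ht,
    lAbs_mul ht, inv_eq_one_div]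
  exact div_le_div_of_nonneg_right (one_le_lAbs_polyLS ht hN)
    (mul_pos (lAbs_pos ht (polyLS_ne_zero hQ)) (lAbs_pos ht (polyLS_ne_zero hQ'))).le

lemma inv_mul_le_lAbs_sub_of_ne (ht : 1 < t) (f : LaurentSeries F) {P Q P' Q' : F[X]}
    (hQ : Q ≠ 0) (hQ' : Q' ≠ 0) (hne : polyLS P / polyLS Q ≠ polyLS P' / polyLS Q')
    (hclose : lAbs t (f - polyLS P' / polyLS Q') <
      (lAbs t (polyLS Q) * lAbs t (polyLS Q'))⁻¹) :
    (lAbs t (polyLS Q) * lAbs t (polyLS Q'))⁻¹ ≤ lAbs t (f - polyLS P / polyLS Q) := by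
  have hgap := inv_mul_le_lAbs_polyLS_div_sub_div ht hQ hQ' hne
  rw [← sub_sub_sub_cancel_left (polyLS P' / polyLS Q') (polyLS P / polyLS Q) f] at hgap
  exact (le_max_iff.1 (hgap.trans (lAbs_sub_le_max ht _ _))).resolve_left hclose.not_ge

lemma pow_le_lAbs_polyLS_succ (ht : 1 < t) {Q : ℕ → F[X]} (hQ : ∀ n ≥ 1, Q n ≠ 0)
    (hlt : ∀ n ≥ 1, lAbs t (polyLS (Q n)) < lAbs t (polyLS (Q (n + 1)))) (n : ℕ) :
    t ^ n ≤ lAbs t (polyLS (Q (n + 1))) := by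
  induction n with
  | zero => simpa using one_le_lAbs_polyLS ht (hQ 1 le_rfl)
  | succ n ih =>
    calc t ^ (n + 1) = t * t ^ n := pow_succ' t n
      _ ≤ t * lAbs t (polyLS (Q (n + 1))) := mul_le_mul_of_nonneg_left ih (by positivity)
      _ ≤ lAbs t (polyLS (Q (n + 2))) := mul_lAbs_le_of_lAbs_lt ht (polyLS_ne_zero (hQ _ (by omega)))
          (polyLS_ne_zero (hQ _ (by omega))) (hlt _ (by omega))

lemma tendsto_lAbs_polyLS (ht : 1 < t) {Q : ℕ → F[X]} (hQ : ∀ n ≥ 1, Q n ≠ 0)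
    (hlt : ∀ n ≥ 1, lAbs t (polyLS (Q n)) < lAbs t (polyLS (Q (n + 1)))) :
    Tendsto (fun n => lAbs t (polyLS (Q n))) atTop atTop :=
  (tendsto_add_atTop_iff_nat 1).1 <| tendsto_atTop_mono (pow_le_lAbs_polyLS_succ ht hQ hlt)
    (tendsto_pow_atTop_atTop_of_one_lt ht)

end PolyLS

section ApproxSet

variable {F : Type*} [Field F]

def approxSet (t : ℝ) (f : LaurentSeries F) (τ : ℝ) : Set (F[X] × F[X]) :=
  {PQ | PQ.2 ≠ 0 ∧ lAbs t (f - polyLS PQ.1 / polyLS PQ.2) < lAbs t (polyLS PQ.2) ^ (-τ)}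

lemma irrExp_eq_sSup (t : ℝ) (f : LaurentSeries F) :
    irrExp t f = sSup {τ | (approxSet t f τ).Infinite} := rfl

variable {t : ℝ}

lemma lAbs_polyLS_le_of_mem_approxSet (ht : 1 < t) {f : LaurentSeries F} {τ B : ℝ}
    {PQ : F[X] × F[X]} (hPQ : PQ ∈ approxSet t f τ) (hB : lAbs t (polyLS PQ.2) ≤ B) :
    lAbs t (polyLS PQ.1) ≤ max (lAbs t f) (B ^ |τ|) * B := by
  obtain ⟨P, Q⟩ := PQ
  obtain ⟨hQ, happrox⟩ := hPQ
  have hQ1 : 1 ≤ lAbs t (polyLS Q) := one_le_lAbs_polyLS ht hQ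
  have herr : lAbs t (polyLS Q) ^ (-τ) ≤ B ^ |τ| :=
    (Real.rpow_le_rpow_of_exponent_le hQ1 (neg_le_abs τ)).trans
      (Real.rpow_le_rpow (by positivity) hB (abs_nonneg τ))
  have hfrac : lAbs t (polyLS P / polyLS Q) ≤ max (lAbs t f) (B ^ |τ|) := by
    rw [← sub_sub_cancel f (polyLS P / polyLS Q)]
    exact (lAbs_sub_le_max ht _ _).trans (max_le_max le_rfl (happrox.le.trans herr))
  rw [← div_mul_cancel₀ (polyLS P) (polyLS_ne_zero hQ), lAbs_mul ht]
  exact mul_le_mul hfrac hB (lAbs_nonneg ht _) ((lAbs_nonneg ht f).trans (le_max_left _ _))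

lemma approxSet_finite_of_bddAbove [Finite F] (ht : 1 < t) {f : LaurentSeries F} {τ : ℝ}
    (hbdd : BddAbove ((fun PQ => lAbs t (polyLS PQ.2)) '' approxSet t f τ)) :
    (approxSet t f τ).Finite := by
  obtain ⟨B, hB⟩ := hbdd
  refine ((finite_setOf_lAbs_polyLS_le ht (max (lAbs t f) (B ^ |τ|) * B)).prod
    (finite_setOf_lAbs_polyLS_le ht B)).subset fun PQ hPQ => ?_
  have hQB : lAbs t (polyLS PQ.2) ≤ B := hB ⟨PQ, hPQ, rfl⟩
  exact ⟨lAbs_polyLS_le_of_mem_approxSet ht hPQ hQB, hQB⟩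

end ApproxSet

section RealExponents

lemma le_of_frequently_rpow_le_mul_rpow {τ σ C : ℝ} (h : ∃ᶠ x in atTop, x ^ τ ≤ C * x ^ σ) :
    τ ≤ σ := by
  by_contra! hστ
  have hev : ∀ᶠ x : ℝ in atTop, C < x ^ (τ - σ) ∧ 0 < x :=
    ((tendsto_rpow_atTop (sub_pos.2 hστ)).eventually_gt_atTop C).and (eventually_gt_atTop 0)
  refine h (hev.mono fun x ⟨hC, hx⟩ => not_le.2 ?_)
  calc C * x ^ σ < x ^ (τ - σ) * x ^ σ := mul_lt_mul_of_pos_right hC (Real.rpow_pos_of_pos hx σ)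
    _ = x ^ τ := by rw [← Real.rpow_add hx, sub_add_cancel]

lemma exists_le_lt_succ_of_tendsto_atTop {u : ℕ → ℝ} (hu : Tendsto u atTop atTop) {y : ℝ}
    (hy : u 1 ≤ y) : ∃ k ≥ 1, u k ≤ y ∧ y < u (k + 1) := by
  have hex : ∃ n, y < u (n + 1) :=
    (((tendsto_add_atTop_iff_nat 1).2 hu).eventually_gt_atTop y).exists
  have hk : 1 ≤ Nat.find hex := Nat.one_le_iff_ne_zero.2 fun h0 =>
    (Nat.find_spec hex).not_ge (by rwa [h0])
  refine ⟨Nat.find hex, hk, ?_, Nat.find_spec hex⟩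
  have := Nat.find_min hex (Nat.sub_one_lt_of_lt hk)
  rwa [Nat.sub_add_cancel hk, not_lt] at this

lemma rpow_le_max_mul_rpow_of_lt_or_lt {x y a c₁ τ δ ρ θ : ℝ} (hx : 1 ≤ x) (hy : 0 ≤ y)
    (ha : 0 < a) (hc₁ : 0 < c₁) (hδ : 0 < δ) (hδρ : δ ≤ ρ) (hθ : 1 ≤ θ)
    (hya : y ≤ a * x ^ (θ / δ)) (h : x ^ τ < x * y ∨ c₁ * x ^ τ < y ^ (1 + ρ)) :
    x ^ τ ≤ max a (a ^ (1 + ρ) / c₁) * x ^ (θ * (1 + ρ) / δ) := by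
  have hx0 : 0 < x := by linarith
  rcases h with h | h
  · have hexp : 1 + θ / δ ≤ θ * (1 + ρ) / δ := by
      rw [one_add_div hδ.ne', div_le_div_iff_of_pos_right hδ]
      nlinarith
    calc x ^ τ ≤ x * y := h.le
      _ ≤ x * (a * x ^ (θ / δ)) := mul_le_mul_of_nonneg_left hya hx0.le
      _ = a * x ^ (1 + θ / δ) := by rw [Real.rpow_add hx0, Real.rpow_one]; ring
      _ ≤ a * x ^ (θ * (1 + ρ) / δ) := by gcongr
      _ ≤ _ := by gcongr; exact le_max_left _ _
  · calc x ^ τ ≤ y ^ (1 + ρ) / c₁ := by rw [le_div_iff₀ hc₁]; linarith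
      _ ≤ (a * x ^ (θ / δ)) ^ (1 + ρ) / c₁ := by gcongr; linarith
      _ = a ^ (1 + ρ) / c₁ * x ^ (θ * (1 + ρ) / δ) := by
        rw [Real.mul_rpow ha.le (by positivity), ← Real.rpow_mul hx0.le, mul_div_right_comm θ]
        ring
      _ ≤ _ := by gcongr; exact le_max_right _ _

end RealExponents

section Bounds

variable {F : Type*} [Field F] {t : ℝ}

lemma approxSet_infinite_of_lt (ht : 1 < t) {f : LaurentSeries F} {τ δ c₂ : ℝ}
    {P Q : ℕ → F[X]} (hQ : ∀ n ≥ 1, Q n ≠ 0)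
    (hlt : ∀ n ≥ 1, lAbs t (polyLS (Q n)) < lAbs t (polyLS (Q (n + 1))))
    (hup : ∀ n ≥ 1,
      lAbs t (f - polyLS (P n) / polyLS (Q n)) ≤ c₂ / lAbs t (polyLS (Q n)) ^ (1 + δ))
    (hτ : τ < 1 + δ) : (approxSet t f τ).Infinite := by
  refine (Set.infinite_of_not_bddAbove (not_bddAbove_iff.2 fun B => ?_)).of_image
    (fun PQ => lAbs t (polyLS PQ.2))
  have hq := tendsto_lAbs_polyLS ht hQ hlt
  obtain ⟨n, hn, hnB, hnc⟩ := ((eventually_ge_atTop 1).and ((hq.eventually_gt_atTop B).and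
    (((tendsto_rpow_atTop (sub_pos.2 hτ)).comp hq).eventually_gt_atTop c₂))).exists
  refine ⟨_, ⟨(P n, Q n), ⟨hQ n hn, (hup n hn).trans_lt ?_⟩, rfl⟩, hnB⟩
  have hpos := lAbs_pos ht (polyLS_ne_zero (hQ n hn))
  rw [div_lt_iff₀ (Real.rpow_pos_of_pos hpos _), ← Real.rpow_add hpos, neg_add_eq_sub]
  exact hnc

lemma rpow_lt_or_lt_of_mem_approxSet (ht : 1 < t) {f : LaurentSeries F} {τ c₁ c₂ δ ρ : ℝ}
    {P₀ Q₀ P Q : F[X]} (hmem : (P₀, Q₀) ∈ approxSet t f τ) (hQ : Q ≠ 0)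
    (hlow : c₁ / lAbs t (polyLS Q) ^ (1 + ρ) ≤ lAbs t (f - polyLS P / polyLS Q))
    (hup : lAbs t (f - polyLS P / polyLS Q) ≤ c₂ / lAbs t (polyLS Q) ^ (1 + δ))
    (hbig : c₂ * lAbs t (polyLS Q₀) < lAbs t (polyLS Q) ^ δ) :
    lAbs t (polyLS Q₀) ^ τ < lAbs t (polyLS Q₀) * lAbs t (polyLS Q) ∨
      c₁ * lAbs t (polyLS Q₀) ^ τ < lAbs t (polyLS Q) ^ (1 + ρ) := by
  obtain ⟨hQ₀, hτ⟩ := hmem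
  set x := lAbs t (polyLS Q₀)
  set y := lAbs t (polyLS Q)
  have hx : 0 < x := lAbs_pos ht (polyLS_ne_zero hQ₀)
  have hy : 0 < y := lAbs_pos ht (polyLS_ne_zero hQ)
  rw [Real.rpow_neg hx.le] at hτ
  by_cases heq : polyLS P₀ / polyLS Q₀ = polyLS P / polyLS Q
  · right
    have := hlow.trans_lt (heq ▸ hτ)
    rwa [div_lt_iff₀ (by positivity), inv_mul_eq_div, lt_div_iff₀ (by positivity)] at this
  · left
    have hclose : lAbs t (f - polyLS P / polyLS Q) < (x * y)⁻¹ := by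
      have hsplit : c₂ / y ^ (1 + δ) = c₂ * x / y ^ δ * (x * y)⁻¹ := by
        rw [Real.rpow_add hy, Real.rpow_one]
        field_simp
      rw [hsplit] at hup
      exact hup.trans_lt (mul_lt_of_lt_one_left (by positivity)
        ((div_lt_one (by positivity)).2 hbig))
    exact (inv_lt_inv₀ (by positivity) (by positivity)).1
      ((inv_mul_le_lAbs_sub_of_ne ht f hQ₀ hQ heq hclose).trans_lt hτ)

lemma le_of_approxSet_infinite [Finite F] (ht : 1 < t) {f : LaurentSeries F}
    {τ δ ρ θ c₀ c₁ c₂ : ℝ} (hδ : 0 < δ) (hδρ : δ ≤ ρ) (hθ : 1 ≤ θ) (hc₀ : 0 < c₀)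
    (hc₁ : 0 < c₁) (hc₂ : 0 < c₂) {P Q : ℕ → F[X]} (hQ : ∀ n ≥ 1, Q n ≠ 0)
    (hlt : ∀ n ≥ 1, lAbs t (polyLS (Q n)) < lAbs t (polyLS (Q (n + 1))))
    (hle : ∀ n ≥ 1, lAbs t (polyLS (Q (n + 1))) ≤ c₀ * lAbs t (polyLS (Q n)) ^ θ)
    (hlow : ∀ n ≥ 1,
      c₁ / lAbs t (polyLS (Q n)) ^ (1 + ρ) ≤ lAbs t (f - polyLS (P n) / polyLS (Q n)))
    (hup : ∀ n ≥ 1,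
      lAbs t (f - polyLS (P n) / polyLS (Q n)) ≤ c₂ / lAbs t (polyLS (Q n)) ^ (1 + δ))
    (hinf : (approxSet t f τ).Infinite) : τ ≤ θ * (1 + ρ) / δ := by
  set a := c₀ * c₂ ^ (θ / δ)
  refine le_of_frequently_rpow_le_mul_rpow (C := max a (a ^ (1 + ρ) / c₁))
    (frequently_atTop.2 fun B => ?_)
  obtain ⟨_, ⟨⟨P₀, Q₀⟩, hmem, rfl⟩, hB⟩ :=
    not_bddAbove_iff.1 (fun hbdd => hinf (approxSet_finite_of_bddAbove ht hbdd))
      (max B (lAbs t (polyLS (Q 1)) ^ δ / c₂))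
  set x := lAbs t (polyLS Q₀)
  have hx : lAbs t (polyLS (Q 1)) ^ δ ≤ c₂ * x := by
    have := (le_max_right _ _).trans_lt hB
    rw [div_lt_iff₀' hc₂] at this
    exact this.le
  obtain ⟨k, hk1, hk, hk'⟩ := exists_le_lt_succ_of_tendsto_atTop
    ((tendsto_rpow_atTop hδ).comp (tendsto_lAbs_polyLS ht hQ hlt)) hx
  have hy : lAbs t (polyLS (Q (k + 1))) ≤ a * x ^ (θ / δ) := calc
    _ ≤ c₀ * lAbs t (polyLS (Q k)) ^ θ := hle k hk1
    _ = c₀ * (lAbs t (polyLS (Q k)) ^ δ) ^ (θ / δ) := by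
      rw [← Real.rpow_mul (lAbs_nonneg ht (polyLS (Q k))), mul_div_cancel₀ _ hδ.ne']
    _ ≤ c₀ * (c₂ * x) ^ (θ / δ) := by gcongr; exacts [Real.rpow_nonneg (lAbs_nonneg ht _) δ, hk]
    _ = a * x ^ (θ / δ) := by rw [Real.mul_rpow hc₂.le (lAbs_nonneg ht (polyLS Q₀)), mul_assoc]
  refine ⟨x, (le_max_left _ _).trans hB.le, ?_⟩
  exact rpow_le_max_mul_rpow_of_lt_or_lt (one_le_lAbs_polyLS ht hmem.1) (lAbs_nonneg ht _)
    (by positivity) hc₁ hδ hδρ hθ hy (rpow_lt_or_lt_of_mem_approxSet ht hmem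
      (hQ _ (by omega)) (hlow _ (by omega)) (hup _ (by omega)) hk')

end Bounds

theorem approximation_lemma_general
    (F : Type*) [Field F] [Fintype F]
    (t : ℝ) (ht : 1 < t)
    (f : LaurentSeries F) (δ ρ θ : ℝ) (hδ : 0 < δ) (hδρ : δ ≤ ρ) (hθ : 1 ≤ θ)
    (c₀ c₁ c₂ : ℝ) (hc₀ : 0 < c₀) (hc₁ : 0 < c₁) (hc₂ : 0 < c₂)
    (P Q : ℕ → Polynomial F) (hQ : ∀ n ≥ 1, Q n ≠ 0)
    (hgrow : ∀ n ≥ 1, lAbs t (polyLS (Q n)) < lAbs t (polyLS (Q (n + 1))) ∧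
      lAbs t (polyLS (Q (n + 1))) ≤ c₀ * lAbs t (polyLS (Q n)) ^ θ)
    (happrox : ∀ n ≥ 1,
      c₁ / lAbs t (polyLS (Q n)) ^ (1 + ρ) ≤ lAbs t (f - polyLS (P n) / polyLS (Q n)) ∧
      lAbs t (f - polyLS (P n) / polyLS (Q n)) ≤ c₂ / lAbs t (polyLS (Q n)) ^ (1 + δ)) :
    1 + δ ≤ irrExp t f ∧ irrExp t f ≤ θ * (1 + ρ) / δ := by
  have hlower : Set.Iio (1 + δ) ⊆ {τ | (approxSet t f τ).Infinite} := fun _ hτ =>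
    approxSet_infinite_of_lt ht hQ (fun n hn => (hgrow n hn).1) (fun n hn => (happrox n hn).2) hτ
  have hupper : ∀ τ ∈ {τ | (approxSet t f τ).Infinite}, τ ≤ θ * (1 + ρ) / δ := fun _ hτ =>
    le_of_approxSet_infinite ht hδ hδρ hθ hc₀ hc₁ hc₂ hQ (fun n hn => (hgrow n hn).1)
      (fun n hn => (hgrow n hn).2) (fun n hn => (happrox n hn).1) (fun n hn => (happrox n hn).2) hτ
  rw [irrExp_eq_sSup]
  constructor
  · calc 1 + δ = sSup (Set.Iio (1 + δ)) := csSup_Iio.symm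
      _ ≤ _ := csSup_le_csSup ⟨_, hupper⟩ Set.nonempty_Iio hlower
  · exact csSup_le ⟨0, hlower (by simp; linarith)⟩ hupper

/-- The approximation lemma: a sequence of rational approximations with controlled
growth of the denominators and controlled quality of approximation pins down the
irrationality exponent: `1 + δ ≤ μ(f) ≤ θ(1+ρ)/δ`. -/
theorem approximation_lemma
    (p e q : ℕ) (hp : p.Prime) (he : 1 ≤ e) (hq : q = p ^ e)
    (F : Type*) [Field F] [Fintype F] (hcard : Fintype.card F = q)
    (t : ℝ) (ht : 1 < t)
    (f : LaurentSeries F) (δ ρ θ : ℝ) (hδ : 0 < δ) (hδρ : δ ≤ ρ) (hθ : 1 ≤ θ)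
    (c₀ c₁ c₂ : ℝ) (hc₀ : 0 < c₀) (hc₁ : 0 < c₁) (hc₂ : 0 < c₂)
    (P Q : ℕ → Polynomial F) (hQ : ∀ n ≥ 1, Q n ≠ 0)
    (hgrow : ∀ n ≥ 1, lAbs t (polyLS (Q n)) < lAbs t (polyLS (Q (n + 1))) ∧
      lAbs t (polyLS (Q (n + 1))) ≤ c₀ * lAbs t (polyLS (Q n)) ^ θ)
    (happrox : ∀ n ≥ 1,
      c₁ / lAbs t (polyLS (Q n)) ^ (1 + ρ) ≤ lAbs t (f - polyLS (P n) / polyLS (Q n)) ∧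
      lAbs t (f - polyLS (P n) / polyLS (Q n)) ≤ c₂ / lAbs t (polyLS (Q n)) ^ (1 + δ)) :
    1 + δ ≤ irrExp t f ∧ irrExp t f ≤ θ * (1 + ρ) / δ :=
  approximation_lemma_general F t ht f δ ρ θ hδ hδρ hθ c₀ c₁ c₂ hc₀ hc₁ hc₂ P Q hQ hgrow happrox
end

section
/- Let f = Σ_{i≥0} a_i T^{-i} ∈ F_2((T^{-1})) be the unique solution with |f| < 1 of X⁴ + X + T/(T⁴+1) = 0. Then the coefficients satisfy: a_0 = 0, a_1 = 0, a_2 = 0, a_3 = 1; a_{i+4} = a_i whenever i is not divisible by 4; and a_{i+1} + a_i + a_{4i+4} + a_{4i} = 0 for all i ≥ 0. Consequently a_{4i+1} = 0, a_{4i+2} = 0, and a_{4i+3} = 1 for all i ≥ 0. -/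
open Polynomial LaurentSeries
open scoped Classical

/-!
In characteristic 2 the Frobenius `f ↦ f⁴` sends `Σ aᵢ Xⁱ` to `Σ aᵢ X⁴ⁱ` (here `X = T⁻¹`), so
`g = f⁴ + f` has coefficient `a_j` at `j` when `4 ∤ j`, and `a_{4k} + a_k` at `4k`. Clearing the
denominator gives `g (X⁻⁴ + 1) = X⁻¹`, i.e. the recurrence `g_{n+4} = g_n + [n = -1]`; as `|f| < 1`
forces `g_n = 0` for `n ≤ 0`, this gives `g = Σₖ X^{4k+3}`. Hence `a_j = [j ≡ 3 mod 4]` for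
`4 ∤ j` and `a_{4k} = a_k`, and every stated relation follows.
-/

open Finset

theorem Finset.sum_eq_sum_filter_fst_eq_snd_of_charTwo {R α : Type*} [Ring R] [CharP R 2]
    [DecidableEq α] {s : Finset (α × α)} (hs : ∀ p ∈ s, p.swap ∈ s) {F : α × α → R}
    (hF : ∀ p, F p.swap = F p) : ∑ p ∈ s, F p = ∑ p ∈ s with p.1 = p.2, F p := by
  rw [← sum_filter_add_sum_filter_not s (fun p => p.1 = p.2), add_eq_left]
  refine sum_involution (fun p _ => p.swap)
    (fun p _ => by rw [hF]; exact CharTwo.add_self_eq_zero _)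
    (fun p hp _ h => ?_) (fun p hp => ?_) (fun p _ => p.swap_swap)
  · exact (mem_filter.mp hp).2 (congrArg Prod.snd h)
  · obtain ⟨hp, hne⟩ := mem_filter.mp hp
    exact mem_filter.mpr ⟨hs p hp, fun h => hne h.symm⟩

instance HahnSeries.instCharP {Γ R : Type*} [AddCommMonoid Γ] [PartialOrder Γ]
    [IsOrderedCancelAddMonoid Γ] [Semiring R] (p : ℕ) [CharP R p] : CharP (HahnSeries Γ R) p :=
  charP_of_injective_ringHom HahnSeries.C_injective p

theorem coeff_eq_zero_of_lAbs_lt_one {F : Type*} [Field F] {t : ℝ} (ht : 1 < t)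
    {f : LaurentSeries F} (hf : lAbs t f < 1) {n : ℤ} (hn : n ≤ 0) : f.coeff n = 0 := by
  unfold lAbs at hf
  split_ifs at hf with hf0
  · simp [hf0]
  · have := (zpow_lt_one_iff_right₀ ht).mp hf
    exact HahnSeries.coeff_eq_zero_of_lt_order (by omega)

namespace LaurentSeries

variable {R : Type*} [CommRing R] [CharP R 2]

theorem coeff_sq_eq_sum_filter (x : LaurentSeries R) (m : ℤ) :
    (x ^ 2).coeff m = ∑ p ∈ Finset.antidiagonal x.isPWO_support x.isPWO_support m with p.1 = p.2,
      x.coeff p.1 * x.coeff p.2 := by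
  rw [sq, HahnSeries.coeff_mul]
  exact sum_eq_sum_filter_fst_eq_snd_of_charTwo (fun p => swap_mem_antidiagonal.mpr)
    (F := fun p => x.coeff p.1 * x.coeff p.2) (fun p => mul_comm _ _)

theorem coeff_sq_two_mul (x : LaurentSeries R) (n : ℤ) :
    (x ^ 2).coeff (2 * n) = x.coeff n ^ 2 := by
  rw [coeff_sq_eq_sum_filter, sq,
    ← sum_singleton (fun p : ℤ × ℤ => x.coeff p.1 * x.coeff p.2) (n, n)]
  refine sum_subset (fun p hp => ?_) (fun p hp hnot => ?_)
  · obtain ⟨hp, hdiag⟩ := mem_filter.mp hp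
    have := (mem_antidiagonal.mp hp).2.2
    rw [mem_singleton]
    ext <;> simp only <;> omega
  · obtain rfl := mem_singleton.mp hp
    by_contra h
    exact hnot (mem_filter.mpr ⟨mem_antidiagonal.mpr
      ⟨left_ne_zero_of_mul h, right_ne_zero_of_mul h, by ring⟩, rfl⟩)

theorem coeff_sq_of_not_two_dvd (x : LaurentSeries R) {m : ℤ} (hm : ¬ 2 ∣ m) :
    (x ^ 2).coeff m = 0 := by
  rw [coeff_sq_eq_sum_filter]
  refine sum_eq_zero fun p hp => ?_
  obtain ⟨hp, hdiag⟩ := mem_filter.mp hp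
  exact absurd ⟨p.1, by rw [← (mem_antidiagonal.mp hp).2.2, ← hdiag]; ring⟩ hm

theorem coeff_pow_four_four_mul (x : LaurentSeries R) (k : ℤ) :
    (x ^ 4).coeff (4 * k) = x.coeff k ^ 4 := by
  rw [show x ^ 4 = (x ^ 2) ^ 2 by ring, show 4 * k = 2 * (2 * k) by ring, coeff_sq_two_mul,
    coeff_sq_two_mul, ← pow_mul]

theorem coeff_pow_four_of_not_four_dvd (x : LaurentSeries R) {m : ℤ} (hm : ¬ 4 ∣ m) :
    (x ^ 4).coeff m = 0 := by
  rw [show x ^ 4 = (x ^ 2) ^ 2 by ring]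
  by_cases h2 : 2 ∣ m
  · obtain ⟨n, rfl⟩ := h2
    rw [coeff_sq_two_mul, coeff_sq_of_not_two_dvd x (by omega), zero_pow two_ne_zero]
  · exact coeff_sq_of_not_two_dvd _ h2

theorem coeff_pow_four_add_self_of_nonpos {f : LaurentSeries R} (h0 : ∀ n ≤ 0, f.coeff n = 0)
    {n : ℤ} (hn : n ≤ 0) : (f ^ 4 + f).coeff n = 0 := by
  rw [HahnSeries.coeff_add, h0 n hn, add_zero]
  by_cases h4 : 4 ∣ n
  · obtain ⟨k, rfl⟩ := h4
    rw [coeff_pow_four_four_mul, h0 k (by omega), zero_pow four_ne_zero]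
  · exact coeff_pow_four_of_not_four_dvd f h4

theorem coeff_add_four_of_mul_eq {g : LaurentSeries R}
    (hg : g * (HahnSeries.single (-4) 1 + 1) = HahnSeries.single (-1) 1) (n : ℤ) :
    g.coeff (n + 4) = g.coeff n + if n = -1 then 1 else 0 := by
  have hshift := HahnSeries.coeff_mul_single_add (x := g) (r := (1 : R)) (a := n + 4) (b := -4)
  rw [add_neg_cancel_right, mul_one] at hshift
  have hcoeff := congrArg (HahnSeries.coeff · n) hg
  simp only [mul_add, mul_one, HahnSeries.coeff_add, hshift, HahnSeries.coeff_single] at hcoeff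
  rw [eq_sub_of_add_eq hcoeff, CharTwo.sub_eq_add, add_comm]
  -- the two `if`s differ only in their `Decidable` instance
  congr

theorem coeff_natCast_of_mul_eq {g : LaurentSeries R}
    (hg : g * (HahnSeries.single (-4) 1 + 1) = HahnSeries.single (-1) 1)
    (h0 : ∀ n ≤ 0, g.coeff n = 0) (j : ℕ) : g.coeff j = if j % 4 = 3 then 1 else 0 := by
  induction j using Nat.strong_induction_on with
  | _ j ih =>
    obtain hj | ⟨m, rfl⟩ : j < 4 ∨ ∃ m, j = m + 4 := by
      rcases lt_or_ge j 4 with hj | hj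
      exacts [.inl hj, .inr ⟨j - 4, by omega⟩]
    · have := coeff_add_four_of_mul_eq hg ((j : ℤ) - 4)
      rw [sub_add_cancel, h0 ((j : ℤ) - 4) (by omega), zero_add] at this
      rw [this]
      interval_cases j <;> simp
    · push_cast
      rw [coeff_add_four_of_mul_eq hg, ih m (by omega), if_neg (show (m : ℤ) ≠ -1 by omega),
        add_zero, Nat.add_mod_right]

end LaurentSeries

section ZModTwo

variable {f : LaurentSeries (ZMod 2)} (h0 : ∀ n ≤ 0, f.coeff n = 0)
  (hf : (f ^ 4 + f) * (HahnSeries.single (-4) 1 + 1) = HahnSeries.single (-1) 1)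
include h0 hf

theorem coeff_natCast_of_not_four_dvd {j : ℕ} (hj : ¬ 4 ∣ j) :
    f.coeff j = if j % 4 = 3 then 1 else 0 := by
  have := coeff_natCast_of_mul_eq hf (fun _ => coeff_pow_four_add_self_of_nonpos h0) j
  rwa [HahnSeries.coeff_add, coeff_pow_four_of_not_four_dvd _ (by omega), zero_add] at this

theorem coeff_four_mul_natCast (j : ℕ) : f.coeff (4 * j) = f.coeff j := by
  have := coeff_natCast_of_mul_eq hf (fun _ => coeff_pow_four_add_self_of_nonpos h0) (4 * j)
  rw [if_neg (by omega), Nat.cast_mul, Nat.cast_ofNat, HahnSeries.coeff_add,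
    coeff_pow_four_four_mul, show 4 = 2 ^ 2 from rfl, ZMod.pow_card_pow] at this
  exact (CharTwo.add_eq_zero.mp this).symm

end ZModTwo

/-- Coefficient relations for the unique solution with `|f| < 1` of
`X⁴ + X + T/(T⁴+1) = 0` over `F₂`: writing `f = Σ_{i≥0} a_i T^{-i}`, one has
`a₀ = a₁ = a₂ = 0`, `a₃ = 1`, `a_{i+4} = a_i` when `4 ∤ i`,
`a_{i+1} + a_i + a_{4i+4} + a_{4i} = 0`, and consequently
`a_{4i+1} = 0`, `a_{4i+2} = 0`, `a_{4i+3} = 1` for all `i`. -/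
theorem coefficients_of_solution (t : ℝ) (ht : 1 < t)
    (T : LaurentSeries (ZMod 2)) (hT : T = HahnSeries.single (-1 : ℤ) (1 : ZMod 2))
    (f : LaurentSeries (ZMod 2))
    (hf1 : lAbs t f < 1) (hf2 : f ^ 4 + f + T / (T ^ 4 + 1) = 0)
    (a : ℕ → ZMod 2) (ha : ∀ i : ℕ, a i = f.coeff (i : ℤ)) :
    a 0 = 0 ∧ a 1 = 0 ∧ a 2 = 0 ∧ a 3 = 1 ∧
      (∀ i : ℕ, ¬ (4 ∣ i) → a (i + 4) = a i) ∧
      (∀ i : ℕ, a (i + 1) + a i + a (4 * i + 4) + a (4 * i) = 0) ∧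
      (∀ i : ℕ, a (4 * i + 1) = 0 ∧ a (4 * i + 2) = 0 ∧ a (4 * i + 3) = 1) := by
  have hT4 : T ^ 4 = HahnSeries.single (-4) 1 := by
    rw [hT, HahnSeries.single_pow]; norm_num
  have hD : T ^ 4 + 1 ≠ 0 := fun h => by simpa [hT4] using congrArg (HahnSeries.coeff · (-4)) h
  have hf : (f ^ 4 + f) * (HahnSeries.single (-4) 1 + 1) = HahnSeries.single (-1) 1 := by
    rw [← hT4, ← hT, CharTwo.add_eq_zero.mp hf2, div_mul_cancel₀ _ hD]
  have h0 : ∀ n ≤ 0, f.coeff n = 0 := fun _ => coeff_eq_zero_of_lAbs_lt_one ht hf1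
  have hres : ∀ j : ℕ, ¬ 4 ∣ j → a j = if j % 4 = 3 then 1 else 0 :=
    fun j hj => (ha j).trans (coeff_natCast_of_not_four_dvd h0 hf hj)
  have h4 : ∀ j : ℕ, a (4 * j) = a j := fun j => by
    rw [ha, ha, Nat.cast_mul, Nat.cast_ofNat, coeff_four_mul_natCast h0 hf]
  refine ⟨(ha 0).trans (h0 0 le_rfl), hres 1 (by decide), hres 2 (by decide), hres 3 (by decide),
    fun i hi => ?_, fun i => ?_, fun i => ⟨?_, ?_, ?_⟩⟩
  · rw [hres _ hi, hres (i + 4) (by omega), Nat.add_mod_right]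
  · rw [show 4 * i + 4 = 4 * (i + 1) by ring, h4, h4, add_right_comm (a (i + 1)),
      CharTwo.add_self_eq_zero, zero_add, CharTwo.add_self_eq_zero]
  all_goals rw [hres _ (by omega)]; simp [Nat.add_mod]
end
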